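/- Let r, s, t be nonnegative integers with s ≠ t and let n ≥ max{r+t+1, r+s+1}. Then there is an isomorphism of stable translation quivers Γ^{n+3}_{r,s,t} ≅ Z T_{r,s,t}/⟨τ^{-(n+3)}⟩. -/

import Mathlib

/-!
Send a vertex `(m, v)` of `ℤT_{r,s,t}` to the diagonal based at `m` whose colour and length are
read off from `v`: the `A`-leg and the centre give the paired diagonals of lengths `2, …, r+2`,
the `B`- and `C`-legs the red and blue diagonals of lengths `r+3, …`. A minimal rotation either
lengthens a diagonal by one at a fixed base, which is an arrow `v → w` of `T_{r,s,t}`, or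
shortens it by one while advancing the base, which is a mesh arrow `(m, w) → (m+1, v)`; since
`s ≠ t`, `τ` is the plain rotation, which moves the base back by one. The bound on `n` keeps all
lengths involved below `n+3`, so they are recovered from their residues modulo `n+3`.
-/

/-!
Coloured oriented single and paired diagonals in a regular polygon, following
L. Lamberti, "Combinatorial model for the cluster categories of type E".

The vertices of the regular `m`-gon `Π` are labelled by `ZMod m` (clockwise).
A coloured oriented diagonal `[i,j]_c` is encoded by the structure `Diag`;
the colour `P` encodes a *paired* diagonal `[i,j]_P = {[i,j]_R, [j,i]_B}`.
-/

inductive Colour : Type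
  | R : Colour
  | B : Colour
  | P : Colour
deriving DecidableEq

/-- A coloured oriented (single or paired) diagonal `[i,j]_c` of the regular
`m`-gon (for `m = 0` we interpret `ZMod 0 = ℤ` as the infinite-sided polygon). -/
structure Diag (m : ℕ) where
  i : ZMod m
  j : ZMod m
  c : Colour
deriving DecidableEq

/-- The simultaneous change of colour and orientation:
`ρ([i,j]_R) = [j,i]_B`, `ρ([i,j]_B) = [j,i]_R`, `ρ([i,j]_P) = [i,j]_P`. -/
def rho {m : ℕ} : Diag m → Diag m
  | ⟨i, j, Colour.R⟩ => ⟨j, i, Colour.B⟩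
  | ⟨i, j, Colour.B⟩ => ⟨j, i, Colour.R⟩
  | ⟨i, j, Colour.P⟩ => ⟨i, j, Colour.P⟩

/-- The anticlockwise rotation `[i,j]_c ↦ [i-1,j-1]_c`. -/
def shiftD {m : ℕ} (d : Diag m) : Diag m := ⟨d.i - 1, d.j - 1, d.c⟩

/-- The slice of `Π_{r,s,t}` based at the vertex `i` of `Π`:
the paired diagonals `[i,i+2]_P, …, [i,i+r+2]_P`, the red single diagonals
`[i,i+r+3]_R, …, [i,i+r+s+2]_R` and the blue single diagonals
`[i+r+3,i]_B, …, [i+r+t+2,i]_B`. -/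
def PiSetAt (r s t : ℕ) {m : ℕ} (i : ZMod m) : Set (Diag m) :=
  {d | (∃ k : ℕ, 2 ≤ k ∧ k ≤ r + 2 ∧ d = ⟨i, i + (k : ZMod m), Colour.P⟩) ∨
       (∃ k : ℕ, r + 3 ≤ k ∧ k ≤ r + s + 2 ∧ d = ⟨i, i + (k : ZMod m), Colour.R⟩) ∨
       (∃ k : ℕ, r + 3 ≤ k ∧ k ≤ r + t + 2 ∧ d = ⟨i + (k : ZMod m), i, Colour.B⟩)}

/-- The set `Π_{r,s,t}` of coloured oriented single and paired diagonals of the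
regular `m`-gon associated to the tree `T_{r,s,t}`. -/
def PiSet (r s t m : ℕ) : Set (Diag m) := ⋃ i : ZMod m, PiSetAt r s t i

open Classical in
/-- The translation `τ` on coloured oriented diagonals: the anticlockwise
rotation `[i,j]_c ↦ [i-1,j-1]_c`, composed with `ρ^{m}` on the first slice
`Π_{r,s,t}|_1` when the tree is symmetric (`s = t`). -/
noncomputable def tauD (r s t : ℕ) {m : ℕ} (d : Diag m) : Diag m :=
  if s = t ∧ d ∈ PiSetAt r s t (1 : ZMod m) then rho^[m] (shiftD d) else shiftD d

/-- Minimal clockwise rotations (before the colour adjustment at the seam):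
`[k,l]_c → [k,l+1]_c`, `[k,l]_c → [k+1,l]_c`, together with
`[k,k+r+2]_P → [k,k+r+3]_R`, `[k,k+r+2]_P → [k+r+3,k]_B`,
`[k,k+r+3]_R → [k+1,k+r+3]_P` and `[k+r+3,k]_B → [k+1,k+r+3]_P`. -/
def Rot (r : ℕ) {m : ℕ} (a b : Diag m) : Prop :=
  b = ⟨a.i, a.j + 1, a.c⟩ ∨ b = ⟨a.i + 1, a.j, a.c⟩ ∨
  (∃ k : ZMod m, a = ⟨k, k + ((r : ZMod m) + 2), Colour.P⟩ ∧
    (b = ⟨k, k + ((r : ZMod m) + 3), Colour.R⟩ ∨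
     b = ⟨k + ((r : ZMod m) + 3), k, Colour.B⟩)) ∨
  (∃ k : ZMod m,
    (a = ⟨k, k + ((r : ZMod m) + 3), Colour.R⟩ ∨
     a = ⟨k + ((r : ZMod m) + 3), k, Colour.B⟩) ∧
    b = ⟨k + 1, k + ((r : ZMod m) + 3), Colour.P⟩)

/-- In the symmetric case `s = t` with an odd-sided polygon, the arrows whose
source lies in `τ(Π_{r,t,t}|_1)` and whose (unadjusted) target lies in the
first slice `Π_{r,t,t}|_1` additionally change colour and orientation. -/
def SeamTwist (r s t m : ℕ) (a b₀ : Diag m) : Prop :=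
  s = t ∧ Odd m ∧ a ∈ (tauD r s t) '' (PiSetAt r s t (1 : ZMod m)) ∧
    b₀ ∈ PiSetAt r s t (1 : ZMod m)

/-- The arrows of the quiver `Γ^{m}_{r,s,t}`: minimal clockwise rotations
between elements of `Π_{r,s,t}`, adjusted by `ρ` at the seam. -/
def ArrowD (r s t m : ℕ) (a b : Diag m) : Prop :=
  a ∈ PiSet r s t m ∧ b ∈ PiSet r s t m ∧
    ∃ b₀, Rot r a b₀ ∧
      ((SeamTwist r s t m a b₀ ∧ b = rho b₀) ∨ (¬ SeamTwist r s t m a b₀ ∧ b = b₀))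

/-- The vertices of the tree `T_{r,s,t}`: a central vertex together with three
legs having `r`, `s`, `t` vertices respectively. -/
inductive TVert (r s t : ℕ) : Type
  | center : TVert r s t
  | legA : Fin r → TVert r s t
  | legB : Fin s → TVert r s t
  | legC : Fin t → TVert r s t
deriving DecidableEq

/-- An orientation of the tree `T_{r,s,t}`: the `A`-leg points towards the
centre, the `B`- and `C`-legs point away from it. -/
def TArrow {r s t : ℕ} (x y : TVert r s t) : Prop :=
  (∃ k l : Fin r, (l : ℕ) + 1 = (k : ℕ) ∧ x = TVert.legA k ∧ y = TVert.legA l) ∨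
  (∃ k : Fin r, (k : ℕ) = 0 ∧ x = TVert.legA k ∧ y = TVert.center) ∨
  (∃ k : Fin s, (k : ℕ) = 0 ∧ x = TVert.center ∧ y = TVert.legB k) ∨
  (∃ k l : Fin s, (k : ℕ) + 1 = (l : ℕ) ∧ x = TVert.legB k ∧ y = TVert.legB l) ∨
  (∃ k : Fin t, (k : ℕ) = 0 ∧ x = TVert.center ∧ y = TVert.legC k) ∨
  (∃ k l : Fin t, (k : ℕ) + 1 = (l : ℕ) ∧ x = TVert.legC k ∧ y = TVert.legC l)

/-- The order-two graph automorphism of a symmetric tree `T_{r,t,t}`,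
exchanging its two legs of length `t`. -/
def treeRho {r t : ℕ} : TVert r t t → TVert r t t
  | TVert.center => TVert.center
  | TVert.legA k => TVert.legA k
  | TVert.legB k => TVert.legC k
  | TVert.legC k => TVert.legB k

/-- `treeRho` as a permutation. -/
def treeRhoPerm (r t : ℕ) : Equiv.Perm (TVert r t t) :=
  Function.Involutive.toPerm treeRho (by intro x; cases x <;> rfl)

/-- The translation of the repetitive quiver `ℤQ`: `τ(m,i) = (m-1,i)`. -/
def ZTau {V : Type} (x : ℤ × V) : ℤ × V := (x.1 - 1, x.2)

/-- The arrows of the repetitive quiver `ℤQ` of a quiver with arrow relation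
`A`: for each arrow `i → j` of `Q` there are arrows `(m,i) → (m,j)` and
`(m,j) → (m+1,i)`. -/
def ZArrow {V : Type} (A : V → V → Prop) (x y : ℤ × V) : Prop :=
  (y.1 = x.1 ∧ A x.2 y.2) ∨ (y.1 = x.1 + 1 ∧ A y.2 x.2)

/-- The automorphism `τ^{-m} σ` of `ℤQ` given by shifting `m` steps to the
right and applying the graph automorphism `σ` of `Q`. -/
def shiftPerm {V : Type} (m : ℕ) (σ : Equiv.Perm V) : Equiv.Perm (ℤ × V) :=
  (Equiv.addRight (m : ℤ)).prodCongr σ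

/-- `φ` exhibits the quiver `Γ^{m}_{r,s,t}` (with vertex set `PiSet r s t m`,
arrow relation `ArrowD` and translation `tauD`) as the quotient of the
repetitive quiver `ℤQ` (with arrow relation `ZArrow A` and translation `ZTau`)
by the cyclic group generated by the automorphism `g`, as stable translation
quivers: `φ` is surjective onto the vertex set, its fibres are exactly the
`g`-orbits, it commutes with the translations, and the arrows of
`Γ^{m}_{r,s,t}` correspond exactly to the `g`-orbits of arrows of `ℤQ`. -/
def IsQuotientIso (r s t m : ℕ) {V : Type} (A : V → V → Prop)
    (g : Equiv.Perm (ℤ × V)) (φ : ℤ × V → Diag m) : Prop :=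
  (∀ x, φ x ∈ PiSet r s t m) ∧
  (∀ d ∈ PiSet r s t m, ∃ x, φ x = d) ∧
  (∀ x y, φ x = φ y ↔ ∃ k : ℤ, (g ^ k) x = y) ∧
  (∀ x, φ (ZTau x) = tauD r s t (φ x)) ∧
  (∀ x y, ArrowD r s t m (φ x) (φ y) ↔
    ∃ y', (∃ k : ℤ, (g ^ k) y = y') ∧ ZArrow A x y')

/-- The diagonal of colour `c` and length `ℓ` based at `i`: red and paired diagonals start at
their base, blue ones end there. -/
def Diag.ofBase {m : ℕ} (i ℓ : ZMod m) : Colour → Diag m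
  | .R => ⟨i, i + ℓ, .R⟩
  | .B => ⟨i + ℓ, i, .B⟩
  | .P => ⟨i, i + ℓ, .P⟩

namespace Diag

variable {m : ℕ}

theorem ofBase_inj {i ℓ i' ℓ' : ZMod m} {c c' : Colour} :
    ofBase i ℓ c = ofBase i' ℓ' c' ↔ i = i' ∧ ℓ = ℓ' ∧ c = c' := by
  cases c <;> cases c' <;> grind [ofBase]

theorem shiftD_ofBase (i ℓ : ZMod m) (c : Colour) :
    shiftD (ofBase i ℓ c) = ofBase (i - 1) ℓ c := by
  cases c <;> simp only [ofBase, shiftD] <;> ring_nf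

theorem rot_ofBase_iff (r : ℕ) {i ℓ i' ℓ' : ZMod m} {c c' : Colour} :
    Rot r (ofBase i ℓ c) (ofBase i' ℓ' c') ↔
      (i' = i ∧ ℓ' = ℓ + 1 ∧ (c' = c ∨ c = .P ∧ ℓ = r + 2 ∧ c' ≠ .P)) ∨
      (i' = i + 1 ∧ ℓ = ℓ' + 1 ∧ (c' = c ∨ c' = .P ∧ ℓ' = r + 2 ∧ c ≠ .P)) := by
  cases c <;> cases c' <;> grind [Rot, ofBase]

end Diag

theorem ZMod.natCast_eq_natCast_iff_of_lt {m a b : ℕ} (ha : a < m) (hb : b < m) :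
    (a : ZMod m) = b ↔ a = b := by
  rw [ZMod.natCast_eq_natCast_iff', Nat.mod_eq_of_lt ha, Nat.mod_eq_of_lt hb]

namespace TVert

variable {r s t m : ℕ}

def colour : TVert r s t → Colour
  | center | legA _ => .P
  | legB _ => .R
  | legC _ => .B

def len : TVert r s t → ℕ
  | center => r + 2
  | legA k => r + 1 - k
  | legB k => r + 3 + k
  | legC k => r + 3 + k

theorem len_le (v : TVert r s t) : v.len ≤ r + max s t + 2 := by
  cases v <;> simp only [len] <;> omega

theorem eq_of_colour_eq_of_len_eq {v w : TVert r s t} (hc : v.colour = w.colour)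
    (hl : v.len = w.len) : v = w := by
  cases v <;> cases w <;> grind [colour, len]

theorem tArrow_iff {v w : TVert r s t} :
    TArrow v w ↔ w.len = v.len + 1 ∧
      (w.colour = v.colour ∨ v.colour = .P ∧ v.len = r + 2 ∧ w.colour ≠ .P) := by
  cases v <;> cases w <;> grind [TArrow, colour, len]

def toDiag (i : ZMod m) (v : TVert r s t) : Diag m := Diag.ofBase i v.len v.colour

theorem toDiag_inj (hm : r + max s t + 2 < m) {i i' : ZMod m} {v w : TVert r s t} :
    v.toDiag i = w.toDiag i' ↔ i = i' ∧ v = w := by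
  have hv := v.len_le
  have hw := w.len_le
  simp only [toDiag, Diag.ofBase_inj, ZMod.natCast_eq_natCast_iff_of_lt (by omega : v.len < m)
    (by omega : w.len < m)]
  constructor
  · rintro ⟨rfl, hl, hc⟩
    exact ⟨rfl, eq_of_colour_eq_of_len_eq hc hl⟩
  · rintro ⟨rfl, rfl⟩
    exact ⟨rfl, rfl, rfl⟩

theorem shiftD_toDiag (i : ZMod m) (v : TVert r s t) :
    shiftD (v.toDiag i) = v.toDiag (i - 1) :=
  Diag.shiftD_ofBase _ _ _

theorem rot_toDiag_iff (hm : r + max s t + 3 < m) {i i' : ZMod m} {v w : TVert r s t} :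
    Rot r (v.toDiag i) (w.toDiag i') ↔
      (i' = i ∧ TArrow v w) ∨ (i' = i + 1 ∧ TArrow w v) := by
  have hv := v.len_le
  have hw := w.len_le
  have cast_inj (a b : ℕ) (ha : a ≤ r + max s t + 3) (hb : b ≤ r + max s t + 3) :
      (a : ZMod m) = b ↔ a = b :=
    ZMod.natCast_eq_natCast_iff_of_lt (by omega) (by omega)
  have hvw : ((w.len : ZMod m) = v.len + 1 ↔ w.len = v.len + 1) := by
    exact_mod_cast cast_inj w.len (v.len + 1) (by omega) (by omega)
  have hwv : ((v.len : ZMod m) = w.len + 1 ↔ v.len = w.len + 1) := by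
    exact_mod_cast cast_inj v.len (w.len + 1) (by omega) (by omega)
  have hv2 : ((v.len : ZMod m) = r + 2 ↔ v.len = r + 2) := by
    exact_mod_cast cast_inj v.len (r + 2) (by omega) (by omega)
  have hw2 : ((w.len : ZMod m) = r + 2 ↔ w.len = r + 2) := by
    exact_mod_cast cast_inj w.len (r + 2) (by omega) (by omega)
  simp only [toDiag, Diag.rot_ofBase_iff, tArrow_iff, hvw, hwv, hv2, hw2,
    eq_comm (a := v.colour) (b := w.colour)]

theorem mem_piSetAt_iff {i : ZMod m} {d : Diag m} :
    d ∈ PiSetAt r s t i ↔ ∃ v : TVert r s t, v.toDiag i = d := by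
  constructor
  · rintro (⟨k, hk2, hk, rfl⟩ | ⟨k, hk, hks, rfl⟩ | ⟨k, hk, hkt, rfl⟩)
    · obtain rfl | hk' := eq_or_lt_of_le hk
      · exact ⟨center, rfl⟩
      · refine ⟨legA ⟨r + 1 - k, by omega⟩, ?_⟩
        simp [toDiag, len, colour, Diag.ofBase, Nat.sub_sub_self (by omega : k ≤ r + 1)]
    · refine ⟨legB ⟨k - (r + 3), by omega⟩, ?_⟩
      simp [toDiag, len, colour, Diag.ofBase, Nat.add_sub_cancel' hk]
    · refine ⟨legC ⟨k - (r + 3), by omega⟩, ?_⟩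
      simp [toDiag, len, colour, Diag.ofBase, Nat.add_sub_cancel' hk]
  · rintro ⟨v, rfl⟩
    cases v with
    | center => exact Or.inl ⟨r + 2, by omega, le_rfl, rfl⟩
    | legA k => exact Or.inl ⟨r + 1 - k, by omega, by omega, rfl⟩
    | legB k => exact Or.inr (Or.inl ⟨r + 3 + k, by omega, by omega, rfl⟩)
    | legC k => exact Or.inr (Or.inr ⟨r + 3 + k, by omega, by omega, rfl⟩)

theorem toDiag_mem_piSet (i : ZMod m) (v : TVert r s t) : v.toDiag i ∈ PiSet r s t m :=
  Set.mem_iUnion.2 ⟨i, mem_piSetAt_iff.2 ⟨v, rfl⟩⟩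

end TVert

section Asymmetric

variable {r s t m : ℕ}

theorem tauD_of_ne (hst : s ≠ t) (d : Diag m) : tauD r s t d = shiftD d :=
  if_neg fun h ↦ hst h.1

theorem arrowD_iff_of_ne (hst : s ≠ t) {a b : Diag m} :
    ArrowD r s t m a b ↔ a ∈ PiSet r s t m ∧ b ∈ PiSet r s t m ∧ Rot r a b := by
  have no_twist (b₀ : Diag m) : ¬ SeamTwist r s t m a b₀ := fun h ↦ hst h.1
  simp [ArrowD, no_twist]

end Asymmetric

section Repetitive

variable {V : Type} {m : ℕ}

theorem shiftPerm_refl_zpow_apply (k : ℤ) (x : ℤ × V) :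
    (shiftPerm m (Equiv.refl V) ^ k) x = (x.1 + k * m, x.2) := by
  induction k using Int.induction_on generalizing x with
  | zero => simp
  | succ k ih =>
    rw [zpow_add_one, Equiv.Perm.mul_apply, ih]
    change (x.1 + m + k * m, x.2) = _
    congr 1
    ring
  | pred k ih =>
    rw [zpow_sub_one, Equiv.Perm.mul_apply, ih]
    change (x.1 - m + -k * m, x.2) = _
    congr 1
    ring

theorem exists_shiftPerm_refl_zpow_apply_eq_iff {x y : ℤ × V} :
    (∃ k : ℤ, (shiftPerm m (Equiv.refl V) ^ k) x = y) ↔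
      (x.1 : ZMod m) = y.1 ∧ x.2 = y.2 := by
  simp only [shiftPerm_refl_zpow_apply, Prod.ext_iff, exists_and_right,
    ZMod.intCast_eq_intCast_iff_dvd_sub, dvd_iff_exists_eq_mul_left]
  exact and_congr_left' (exists_congr fun k ↦ by rw [sub_eq_iff_eq_add', eq_comm])

theorem exists_shiftPerm_refl_zpow_zArrow_iff {A : V → V → Prop} {x y : ℤ × V} :
    (∃ y', (∃ k : ℤ, (shiftPerm m (Equiv.refl V) ^ k) y = y') ∧ ZArrow A x y') ↔
      ((y.1 : ZMod m) = x.1 ∧ A x.2 y.2) ∨ ((y.1 : ZMod m) = x.1 + 1 ∧ A y.2 x.2) := by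
  simp only [exists_shiftPerm_refl_zpow_apply_eq_iff]
  constructor
  · rintro ⟨⟨_, _⟩, ⟨hy, rfl⟩, ⟨rfl, hA⟩ | ⟨rfl, hA⟩⟩
    · exact Or.inl ⟨hy, hA⟩
    · exact Or.inr ⟨by simpa using hy, hA⟩
  · rintro (⟨hy, hA⟩ | ⟨hy, hA⟩)
    · exact ⟨(x.1, y.2), ⟨hy, rfl⟩, Or.inl ⟨rfl, hA⟩⟩
    · exact ⟨(x.1 + 1, y.2), ⟨by simpa using hy, rfl⟩, Or.inr ⟨rfl, hA⟩⟩

end Repetitive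

/-- Theorem 4.2, asymmetric case. Let `r, s, t` be
nonnegative integers with `s ≠ t` and let `n ≥ max {r+t+1, r+s+1}`. Then
there is an isomorphism of stable translation quivers
`Γ^{n+3}_{r,s,t} ≅ ℤ T_{r,s,t} / ⟨τ^{-(n+3)}⟩`. -/
theorem gamma_iso_ZT_quotient (r s t n : ℕ) (hst : s ≠ t)
    (hn : max (r + t + 1) (r + s + 1) ≤ n) :
    ∃ φ : ℤ × TVert r s t → Diag (n + 3),
      IsQuotientIso r s t (n + 3) TArrow
        (shiftPerm (n + 3) (Equiv.refl (TVert r s t))) φ := by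
  have hm : r + max s t + 3 < n + 3 := by omega
  refine ⟨fun x ↦ x.2.toDiag x.1, fun x ↦ TVert.toDiag_mem_piSet _ _, fun d hd ↦ ?_,
    fun x y ↦ ?_, fun x ↦ ?_, fun x y ↦ ?_⟩
  · obtain ⟨i, hi⟩ := Set.mem_iUnion.1 hd
    obtain ⟨v, rfl⟩ := TVert.mem_piSetAt_iff.1 hi
    exact ⟨(i.cast, v), by simp only [ZMod.intCast_zmod_cast]⟩
  · rw [TVert.toDiag_inj (by omega), exists_shiftPerm_refl_zpow_apply_eq_iff]
  · simp [ZTau, tauD_of_ne hst, TVert.shiftD_toDiag]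
  · simp only [arrowD_iff_of_ne hst, TVert.toDiag_mem_piSet, true_and,
      TVert.rot_toDiag_iff hm, exists_shiftPerm_refl_zpow_zArrow_iff]
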